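/- arXiv:2210.09331 — 4 statements merged into one kernel-verified Lean document; each statement's English description precedes it below -/
import Mathlib

section
/- Let (Ω, F, (F_t)_{t∈[0,T]}, Q) be a filtered probability space and let (μ_t)_{t∈[0,T]} be a progressively measurable M_+(E)-valued process with E_Q[sup_{t∈[0,T]} μ_t(E)] < ∞, such that for every φ ∈ D_1 the real-valued process t ↦ ⟨φ, μ_t⟩ + ∫_0^t ⟨φ', μ_s⟩ ds is a Q-martingale on [0,T]. Then for every 0 ≤ τ_1 < τ_2 ≤ T and every weight function w(·; τ_1, τ_2) ∈ C^∞(ℝ), the future price process F(t, τ_1, τ_2) := ∫_E w(t+x; τ_1, τ_2) 1_{(τ_1,τ_2]}(t+x) μ_t(dx), t ∈ [0, τ_1], is a Q-martingale on [0, τ_1]; in particular the futures market satisfies the no-arbitrage condition NAFLVR (Theorem 3.1). -/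
open MeasureTheory Set Filter

noncomputable section

/-- `M₊(E)`: finite non-negative Borel measures on `E = [0,T]`, with the weak topology. -/
abbrev MV (T : ℝ) := MeasureTheory.FiniteMeasure (Set.Icc (0:ℝ) T)

/-- `⟨φ, ν⟩ = ∫_E φ(x) ν(dx)`. -/
def pairF {T : ℝ} (φ : ℝ → ℝ) (ν : MV T) : ℝ :=
  ∫ x, φ (x : ℝ) ∂(ν : Measure (Set.Icc (0:ℝ) T))

/-- `φ ∈ D₁`: (the restriction to `E` of) a smooth function on `ℝ` with `φ'(0) = 0`. -/
def memD1 (φ : ℝ → ℝ) : Prop := ContDiff ℝ (⊤ : ℕ∞) φ ∧ deriv φ 0 = 0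

/-- A real-valued martingale on the time interval `[a,b]` w.r.t. filtration `ℱ` and measure `Q`. -/
def IsMartOn {Ω : Type*} {m0 : MeasurableSpace Ω} (ℱ : MeasureTheory.Filtration ℝ m0)
    (Q : MeasureTheory.Measure Ω) (a b : ℝ) (X : ℝ → Ω → ℝ) : Prop :=
  (∀ t ∈ Set.Icc a b,
      MeasureTheory.Integrable (X t) Q ∧ StronglyMeasurable[ℱ t] (X t)) ∧
  ∀ s t, s ∈ Set.Icc a b → t ∈ Set.Icc a b → s ≤ t → Q[X t | ℱ s] =ᵐ[Q] X s

/-- A real-valued local martingale on `[a,b]`: there are stopping times increasing a.s. to `b`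
such that each stopped process is a martingale on `[a,b]`. -/
def IsLocalMartOn {Ω : Type*} {m0 : MeasurableSpace Ω} (ℱ : MeasureTheory.Filtration ℝ m0)
    (Q : MeasureTheory.Measure Ω) (a b : ℝ) (X : ℝ → Ω → ℝ) : Prop :=
  ∃ τ : ℕ → Ω → ℝ,
    (∀ n, MeasureTheory.IsStoppingTime ℱ (fun ω => ((τ n ω : ℝ) : WithTop ℝ))) ∧
    (∀ᵐ ω ∂Q, Monotone (fun n => τ n ω) ∧
      Filter.Tendsto (fun n => τ n ω) Filter.atTop (nhds b)) ∧
    ∀ n, IsMartOn ℱ Q a b (fun t ω => X (min t (τ n ω)) ω)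

/-- The HJM drift condition: for all `φ ∈ D₁`, `⟨φ, μ_t⟩ + ∫_0^t ⟨φ', μ_s⟩ ds`
is a local martingale on `[0,T]`. -/
def HJMdrift {T : ℝ} {Ω : Type*} {m0 : MeasurableSpace Ω} (ℱ : MeasureTheory.Filtration ℝ m0)
    (Q : MeasureTheory.Measure Ω) (μ : ℝ → Ω → MV T) : Prop :=
  ∀ φ : ℝ → ℝ, memD1 φ →
    IsLocalMartOn ℱ Q 0 T (fun t ω =>
      pairF φ (μ t ω) + ∫ s in (0:ℝ)..t, pairF (deriv φ) (μ s ω))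

/-! Fix `A ∈ ℱ_s` and a smooth `G` vanishing on `(-∞, τ₁]`, and put
`Φ(u, τ) = ∫_A ⟨G(u + ·), μ_τ⟩ dQ`. For `u ≤ τ₁` the shifted function `G(u + ·)` lies in `D₁`,
so the drift condition gives `∂_τ Φ = -∫_A ⟨G'(u + ·), μ_τ⟩ dQ`, while differentiating under the
integral gives `∂_u Φ = +∫_A ⟨G'(u + ·), μ_τ⟩ dQ`. Along the diagonal the two cancel, so
`r ↦ Φ(r, r)` is constant on `[s, t]`; rigorously, its increments are quadratic in the step
because the same two identities, applied to `G'`, make `∫_A ⟨G'(u + ·), μ_τ⟩ dQ` Lipschitz in both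
variables. The expected mass is constant (take `φ = 1`), which bounds all these quantities
uniformly. Approximating `w 1_{(τ₁,τ₂]}` by such `G` and passing to the limit by dominated
convergence gives `∫_A F(t) dQ = ∫_A F(s) dQ`. -/

open scoped NNReal Topology

lemma hasDerivWithinAt_zero_of_abs_sub_le_sq {f : ℝ → ℝ} {s : Set ℝ} {x C : ℝ}
    (h : ∀ y ∈ s, |f y - f x| ≤ C * (y - x) ^ 2) : HasDerivWithinAt f 0 s x := by
  rw [hasDerivWithinAt_iff_isLittleO]
  have hO : (fun y => f y - f x) =O[𝓝[s] x] fun y => ‖y - x‖ ^ 2 :=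
    Asymptotics.IsBigO.of_bound C (eventually_nhdsWithin_of_forall fun y hy => by
      simpa [sq_abs] using h y hy)
  simpa using hO.trans_isLittleO
    ((Asymptotics.isLittleO_pow_sub_sub x one_lt_two).mono nhdsWithin_le_nhds)

lemma eq_of_abs_sub_le_sq {f : ℝ → ℝ} {a b C : ℝ} (hab : a ≤ b)
    (h : ∀ x ∈ Icc a b, ∀ y ∈ Icc a b, x ≤ y → |f y - f x| ≤ C * (y - x) ^ 2) :
    f b = f a := by
  have hsymm : ∀ x ∈ Icc a b, ∀ y ∈ Icc a b, |f y - f x| ≤ C * (y - x) ^ 2 := by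
    intro x hx y hy
    rcases le_total x y with hxy | hyx
    · exact h x hx y hy hxy
    · rw [abs_sub_comm, ← neg_sub x y, neg_sq]
      exact h y hy x hx hyx
  have hderiv : ∀ x ∈ Icc a b, HasDerivWithinAt f 0 (Icc a b) x := fun x hx =>
    hasDerivWithinAt_zero_of_abs_sub_le_sq (hsymm x hx)
  exact constant_of_has_deriv_right_zero (fun x hx => (hderiv x hx).continuousWithinAt)
    (fun x hx => (hderiv x (Ico_subset_Icc_self hx)).mono_of_mem_nhdsWithin
      (Icc_mem_nhdsGE_of_mem hx)) b ⟨hab, le_rfl⟩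

lemma lipschitzOnWith_of_sub_eq_integral {f g : ℝ → ℝ} {a b : ℝ} {K : ℝ≥0}
    (hfg : ∀ x ∈ Icc a b, ∀ y ∈ Icc a b, x ≤ y → f y - f x = ∫ v in x..y, g v)
    (hg : ∀ v ∈ Icc a b, |g v| ≤ K) : LipschitzOnWith K f (Icc a b) := by
  have hle : ∀ x ∈ Icc a b, ∀ y ∈ Icc a b, x ≤ y → |f y - f x| ≤ K * |y - x| := by
    intro x hx y hy hxy
    rw [hfg x hx y hy hxy]
    exact intervalIntegral.norm_integral_le_of_norm_le_const fun v hv =>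
      (Real.norm_eq_abs _).trans_le (hg v (uIcc_subset_Icc hx hy (uIoc_subset_uIcc hv)))
  refine LipschitzOnWith.of_dist_le_mul fun x hx y hy => ?_
  rw [Real.dist_eq, Real.dist_eq]
  rcases le_total x y with hxy | hyx
  · rw [abs_sub_comm, abs_sub_comm x]; exact hle x hx y hy hxy
  · exact hle y hy x hx hyx

/-- The first-order variations in `u` and in `τ` cancel along the diagonal, leaving an error
quadratic in the step. -/
lemma abs_sub_diag_le_of_transport {F F' : ℝ → ℝ → ℝ} {a b : ℝ} {L : ℝ≥0}
    (hspace : ∀ τ ∈ Icc a b, ∀ u ∈ Icc a b, ∀ u' ∈ Icc a b, F u' τ - F u τ = ∫ v in u..u', F' v τ)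
    (htime : ∀ u ∈ Icc a b, ∀ τ ∈ Icc a b, ∀ τ' ∈ Icc a b, τ ≤ τ' →
      F u τ' - F u τ = -∫ v in τ..τ', F' u v)
    (hlip_space : ∀ τ ∈ Icc a b, LipschitzOnWith L (F' · τ) (Icc a b))
    (hlip_time : ∀ u ∈ Icc a b, LipschitzOnWith L (F' u ·) (Icc a b))
    {t₁ t₂ : ℝ} (ht₁ : t₁ ∈ Icc a b) (ht₂ : t₂ ∈ Icc a b) (ht : t₁ ≤ t₂) :
    |F t₂ t₂ - F t₁ t₁| ≤ 2 * L * (t₂ - t₁) ^ 2 := by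
  have hsub : Icc t₁ t₂ ⊆ Icc a b := Icc_subset_Icc ht₁.1 ht₂.2
  have hint_space : IntervalIntegrable (F' · t₂) volume t₁ t₂ :=
    ((hlip_space t₂ ht₂).continuousOn.mono hsub).intervalIntegrable_of_Icc ht
  have hint_time : IntervalIntegrable (F' t₁ ·) volume t₁ t₂ :=
    ((hlip_time t₁ ht₁).continuousOn.mono hsub).intervalIntegrable_of_Icc ht
  have hsplit : F t₂ t₂ - F t₁ t₁ = ∫ v in t₁..t₂, (F' v t₂ - F' t₁ v) := by
    rw [intervalIntegral.integral_sub hint_space hint_time]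
    linarith [hspace t₂ ht₂ t₁ ht₁ t₂ ht₂, htime t₁ ht₁ t₁ ht₁ t₂ ht₂ ht]
  have hbound : ∀ v ∈ Set.uIoc t₁ t₂, ‖F' v t₂ - F' t₁ v‖ ≤ 2 * L * (t₂ - t₁) := by
    intro v hv
    rw [uIoc_of_le ht] at hv
    have hv' : v ∈ Icc a b := hsub (Ioc_subset_Icc_self hv)
    have h₁ := (hlip_space t₂ ht₂).dist_le_mul v hv' t₁ ht₁
    have h₂ := (hlip_time t₁ ht₁).dist_le_mul t₂ ht₂ v hv'
    rw [Real.dist_eq, Real.dist_eq, abs_of_nonneg (sub_nonneg.2 hv.1.le)] at h₁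
    rw [Real.dist_eq, Real.dist_eq, abs_of_nonneg (sub_nonneg.2 hv.2)] at h₂
    calc ‖F' v t₂ - F' t₁ v‖ ≤ |F' v t₂ - F' t₁ t₂| + |F' t₁ t₂ - F' t₁ v| := abs_sub_le _ _ _
      _ ≤ L * (v - t₁) + L * (t₂ - v) := add_le_add h₁ h₂
      _ ≤ 2 * L * (t₂ - t₁) := by nlinarith [hv.1, hv.2, L.2]
  calc |F t₂ t₂ - F t₁ t₁| ≤ 2 * L * (t₂ - t₁) * |t₂ - t₁| := by
        rw [hsplit]; exact intervalIntegral.norm_integral_le_of_norm_le_const hbound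
    _ = 2 * L * (t₂ - t₁) ^ 2 := by rw [abs_of_nonneg (sub_nonneg.2 ht)]; ring

lemma diag_eq_of_transport {F F' : ℝ → ℝ → ℝ} {a b : ℝ} {L : ℝ≥0} (hab : a ≤ b)
    (hspace : ∀ τ ∈ Icc a b, ∀ u ∈ Icc a b, ∀ u' ∈ Icc a b, F u' τ - F u τ = ∫ v in u..u', F' v τ)
    (htime : ∀ u ∈ Icc a b, ∀ τ ∈ Icc a b, ∀ τ' ∈ Icc a b, τ ≤ τ' →
      F u τ' - F u τ = -∫ v in τ..τ', F' u v)
    (hlip_space : ∀ τ ∈ Icc a b, LipschitzOnWith L (F' · τ) (Icc a b))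
    (hlip_time : ∀ u ∈ Icc a b, LipschitzOnWith L (F' u ·) (Icc a b)) :
    F b b = F a a :=
  eq_of_abs_sub_le_sq (f := fun r => F r r) hab fun _ hx _ hy hxy =>
    abs_sub_diag_le_of_transport hspace htime hlip_space hlip_time hx hy hxy

lemma exists_abs_le_of_continuousOn {f : ℝ → ℝ} {a b : ℝ} (hf : ContinuousOn f (Icc a b)) :
    ∃ C, ∀ x ∈ Icc a b, |f x| ≤ C :=
  isCompact_Icc.exists_bound_of_continuousOn hf

lemma eqOn_deriv_zero_of_eqOn_Iic {f : ℝ → ℝ} {c : ℝ} (hf : Differentiable ℝ f)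
    (h0 : EqOn f 0 (Iic c)) : EqOn (deriv f) 0 (Iic c) := fun u hu =>
  (uniqueDiffOn_Iic c u hu).eq_deriv _ (hf u).hasDerivAt.hasDerivWithinAt
    ((hasDerivWithinAt_const u (Iic c) 0).congr (fun _ hy => h0 hy) (h0 hu))

lemma memD1_comp_const_add {g : ℝ → ℝ} (hg : ContDiff ℝ (⊤ : ℕ∞) g) {u : ℝ}
    (hu : deriv g u = 0) : memD1 (fun x => g (u + x)) :=
  ⟨hg.comp (contDiff_const.add contDiff_id), by rw [deriv_comp_const_add, add_zero, hu]⟩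

lemma exists_smooth_tendsto_indicator_Ioc {n : ℕ∞} {w : ℝ → ℝ} (hw : ContDiff ℝ n w)
    (a b : ℝ) :
    ∃ g : ℕ → ℝ → ℝ, (∀ k, ContDiff ℝ n (g k)) ∧ (∀ k, EqOn (g k) 0 (Iic a)) ∧
      (∀ k y, |g k y| ≤ |w y|) ∧
      ∀ y, Tendsto (g · y) atTop (𝓝 (indicator (Ioc a b) w y)) := by
  -- `χ k` rises from `0` to `1` on `[a, a + 1/k]` and falls back to `0` on `[b, b + 1/k]`.
  set χ : ℕ → ℝ → ℝ := fun k y =>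
    Real.smoothTransition (k * (y - a)) * Real.smoothTransition (k * (b - y) + 1)
  have hχ_zero : ∀ k, ∀ y ≤ a, χ k y = 0 := fun k y hy => by
    simp only [χ, Real.smoothTransition.zero_of_nonpos
      (mul_nonpos_of_nonneg_of_nonpos k.cast_nonneg (sub_nonpos.2 hy)), zero_mul]
  have hχ_lim : ∀ y, ∀ᶠ k in atTop, χ k y = indicator (Ioc a b) 1 y := by
    intro y
    have large : ∀ {x : ℝ}, 0 < x → ∀ᶠ k : ℕ in atTop, 1 ≤ k * x := fun hx =>
      (tendsto_natCast_atTop_atTop.atTop_mul_const hx).eventually_ge_atTop 1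
    rcases le_or_gt y a with hya | hay
    · exact Eventually.of_forall fun k => by
        rw [hχ_zero k y hya, indicator_of_notMem fun h => (not_lt.2 hya) h.1]
    rcases le_or_gt y b with hyb | hby
    · filter_upwards [large (sub_pos.2 hay)] with k hk
      have hk' : 1 ≤ k * (b - y) + 1 := by nlinarith [k.cast_nonneg (α := ℝ)]
      simp [χ, indicator_of_mem (show y ∈ Ioc a b from ⟨hay, hyb⟩),
        Real.smoothTransition.one_of_one_le hk, Real.smoothTransition.one_of_one_le hk']
    · filter_upwards [large (sub_pos.2 hby)] with k hk
      have hk' : k * (b - y) + 1 ≤ 0 := by nlinarith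
      simp [χ, indicator_of_notMem fun h : y ∈ Ioc a b => (not_le.2 hby) h.2,
        Real.smoothTransition.zero_of_nonpos hk']
  refine ⟨fun k y => w y * χ k y, fun k => ?_, fun k y hy => ?_, fun k y => ?_, fun y => ?_⟩
  · exact hw.mul ((Real.smoothTransition.contDiff.comp (contDiff_const.mul
      (contDiff_id.sub contDiff_const))).mul (Real.smoothTransition.contDiff.comp
      ((contDiff_const.mul (contDiff_const.sub contDiff_id)).add contDiff_const)))
  · simp [hχ_zero k y hy]
  · rw [abs_mul]
    refine mul_le_of_le_one_right (abs_nonneg _) ?_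
    rw [abs_of_nonneg (mul_nonneg (Real.smoothTransition.nonneg _)
      (Real.smoothTransition.nonneg _))]
    exact mul_le_one₀ (Real.smoothTransition.le_one _) (Real.smoothTransition.nonneg _)
      (Real.smoothTransition.le_one _)
  · refine tendsto_const_nhds.congr' ?_
    filter_upwards [hχ_lim y] with k hk
    by_cases hy : y ∈ Ioc a b <;> simp [hk, hy]

section Pairing

variable {T : ℝ}

lemma pairF_one (ν : MV T) : pairF (fun _ => 1) ν = ν.mass := by
  simp [pairF, FiniteMeasure.mass]

lemma abs_pairF_le {ψ : ℝ → ℝ} {C : ℝ} (hC : ∀ x ∈ Icc 0 T, |ψ x| ≤ C) (ν : MV T) :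
    |pairF ψ ν| ≤ C * ν.mass :=
  norm_integral_le_of_norm_le_const (μ := (ν : Measure (Icc (0:ℝ) T)))
    (Eventually.of_forall fun x => (Real.norm_eq_abs _).trans_le (hC x x.2))

lemma hasDerivAt_pairF_comp_add {g : ℝ → ℝ} (hg : ContDiff ℝ 1 g) (ν : MV T) (u₀ : ℝ) :
    HasDerivAt (fun u => pairF (fun x => g (u + x)) ν)
      (pairF (fun x => deriv g (u₀ + x)) ν) u₀ := by
  have hg' : Continuous (deriv g) := hg.continuous_deriv le_rfl
  obtain ⟨K, hK⟩ := exists_abs_le_of_continuousOn (a := u₀ - 1) (b := u₀ + 1 + T)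
    hg'.continuousOn
  have hmem : ∀ u ∈ Metric.ball u₀ 1, ∀ x : Icc (0:ℝ) T,
      u + (x : ℝ) ∈ Icc (u₀ - 1) (u₀ + 1 + T) := fun u hu x => by
    have := abs_lt.1 (Real.dist_eq u u₀ ▸ Metric.mem_ball.1 hu)
    exact ⟨by linarith [x.2.1], by linarith [x.2.2]⟩
  have hshift : ∀ {f : ℝ → ℝ}, Continuous f → ∀ u : ℝ,
      AEStronglyMeasurable (fun x : Icc (0:ℝ) T => f (u + x)) ν :=
    fun hf u => (hf.comp (continuous_const.add continuous_subtype_val)).aestronglyMeasurable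
  refine (hasDerivAt_integral_of_dominated_loc_of_deriv_le (Metric.ball_mem_nhds u₀ one_pos)
    (Eventually.of_forall (hshift hg.continuous)) ?_ (hshift hg' u₀)
    (Eventually.of_forall fun x u hu => hK _ (hmem u hu x)) (integrable_const K)
    (Eventually.of_forall fun x u _ => ?_)).2
  · exact (hg.continuous.comp (continuous_const.add continuous_subtype_val)
      ).integrable_of_hasCompactSupport (.of_compactSpace _)
  · exact ((hg.differentiable one_ne_zero _).hasDerivAt.comp u
      ((hasDerivAt_id u).add_const _)).congr_deriv (mul_one _)

lemma tendsto_pairF {g : ℕ → ℝ → ℝ} {f : ℝ → ℝ} {C : ℝ} (hg : ∀ n, Measurable (g n))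
    (hC : ∀ n, ∀ x ∈ Icc 0 T, |g n x| ≤ C)
    (hlim : ∀ x ∈ Icc 0 T, Tendsto (g · x) atTop (𝓝 (f x))) (ν : MV T) :
    Tendsto (fun n => pairF (g n) ν) atTop (𝓝 (pairF f ν)) :=
  tendsto_integral_of_dominated_convergence (fun _ => C)
    (fun n => ((hg n).comp measurable_subtype_coe).aestronglyMeasurable) (integrable_const C)
    (fun n => Eventually.of_forall fun x => (Real.norm_eq_abs _).trans_le (hC n x x.2))
    (Eventually.of_forall fun x => hlim x x.2)

end Pairing

section Martingale

variable {Ω : Type*} {m0 : MeasurableSpace Ω} {ℱ : Filtration ℝ m0} {Q : Measure Ω}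
  [IsFiniteMeasure Q]

lemma IsMartOn.setIntegral_eq {a b s t : ℝ} {X : ℝ → Ω → ℝ} (hX : IsMartOn ℱ Q a b X)
    (hs : s ∈ Icc a b) (ht : t ∈ Icc a b) (hst : s ≤ t) {A : Set Ω}
    (hA : MeasurableSet[ℱ s] A) : ∫ ω in A, X t ω ∂Q = ∫ ω in A, X s ω ∂Q := by
  rw [← setIntegral_condExp (ℱ.le s) (hX.1 t ht).1 hA]
  exact setIntegral_congr_ae (ℱ.le s A hA) ((hX.2 s t hs ht hst).mono fun ω h _ => h)

lemma isMartOn_of_setIntegral_eq {a b : ℝ} {X : ℝ → Ω → ℝ}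
    (hint : ∀ t ∈ Icc a b, Integrable (X t) Q)
    (hadapt : ∀ t ∈ Icc a b, StronglyMeasurable[ℱ t] (X t))
    (heq : ∀ s ∈ Icc a b, ∀ t ∈ Icc a b, s ≤ t → ∀ A, MeasurableSet[ℱ s] A →
      ∫ ω in A, X t ω ∂Q = ∫ ω in A, X s ω ∂Q) :
    IsMartOn ℱ Q a b X :=
  ⟨fun t ht => ⟨hint t ht, hadapt t ht⟩, fun s t hs ht hst =>
    (ae_eq_condExp_of_forall_setIntegral_eq (ℱ.le s) (hint t ht)
      (fun _ _ _ => (hint s hs).integrableOn) (fun A hA _ => (heq s hs t ht hst A hA).symm)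
      (hadapt s hs).aestronglyMeasurable).symm⟩

end Martingale

def ProgressivePairing {T : ℝ} {Ω : Type*} {m0 : MeasurableSpace Ω} (ℱ : Filtration ℝ m0)
    (μ : ℝ → Ω → MV T) : Prop :=
  ∀ φ : ℝ → ℝ, Measurable φ → IsStronglyProgressive ℱ (fun t ω => pairF φ (μ t ω))

def HJMdriftMart {T : ℝ} {Ω : Type*} {m0 : MeasurableSpace Ω} (ℱ : Filtration ℝ m0)
    (Q : Measure Ω) (μ : ℝ → Ω → MV T) : Prop :=
  ∀ φ : ℝ → ℝ, memD1 φ →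
    IsMartOn ℱ Q 0 T (fun t ω => pairF φ (μ t ω) + ∫ s in (0:ℝ)..t, pairF (deriv φ) (μ s ω))

section DriftCondition

variable {T : ℝ} {Ω : Type*} {m0 : MeasurableSpace Ω} {ℱ : Filtration ℝ m0} {Q : Measure Ω}
  {μ : ℝ → Ω → MV T}

lemma isMartOn_mass (hHJM : HJMdriftMart ℱ Q μ) :
    IsMartOn ℱ Q 0 T (fun t ω => ((μ t ω).mass : ℝ)) := by
  convert hHJM (fun _ => 1) ⟨contDiff_const, deriv_const 0 1⟩ using 1
  ext t ω
  rw [pairF_one]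
  simp [pairF]

lemma integrable_pairF
    (hprog : ProgressivePairing ℱ μ)
    (hmass : IsMartOn ℱ Q 0 T (fun t ω => ((μ t ω).mass : ℝ)))
    {ψ : ℝ → ℝ} (hψ : Measurable ψ) {C : ℝ} (hC : ∀ x ∈ Icc 0 T, |ψ x| ≤ C)
    {t : ℝ} (ht : t ∈ Icc 0 T) : Integrable (fun ω => pairF ψ (μ t ω)) Q :=
  ((hmass.1 t ht).1.const_mul C).mono' ((((hprog ψ hψ).stronglyAdapted t).mono
    (ℱ.le t)).aestronglyMeasurable) (Eventually.of_forall fun ω =>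
      (Real.norm_eq_abs _).trans_le (abs_pairF_le hC (μ t ω)))

lemma setIntegral_abs_pairF_le [IsFiniteMeasure Q]
    (hmass : IsMartOn ℱ Q 0 T (fun t ω => ((μ t ω).mass : ℝ)))
    {ψ : ℝ → ℝ} {C : ℝ} (hC : ∀ x ∈ Icc 0 T, |ψ x| ≤ C)
    {t : ℝ} (ht : t ∈ Icc 0 T) (A : Set Ω) :
    ∫ ω in A, |pairF ψ (μ t ω)| ∂Q ≤ C * ∫ ω, ((μ 0 ω).mass : ℝ) ∂Q := by
  have hC0 : 0 ≤ C := (abs_nonneg _).trans (hC t ht)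
  have hmass_t : Integrable (fun ω => ((μ t ω).mass : ℝ)) Q := (hmass.1 t ht).1
  calc ∫ ω in A, |pairF ψ (μ t ω)| ∂Q ≤ ∫ ω in A, C * (μ t ω).mass ∂Q :=
        integral_mono_of_nonneg (Eventually.of_forall fun ω => abs_nonneg _)
          (hmass_t.const_mul C).restrict (Eventually.of_forall fun ω => abs_pairF_le hC (μ t ω))
    _ ≤ ∫ ω, C * (μ t ω).mass ∂Q := setIntegral_le_integral (hmass_t.const_mul C)
        (Eventually.of_forall fun ω => mul_nonneg hC0 (μ t ω).mass.2)
    _ = C * ∫ ω, ((μ 0 ω).mass : ℝ) ∂Q := by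
        rw [integral_const_mul, ← setIntegral_univ,
          ← setIntegral_univ (f := fun ω => ((μ 0 ω).mass : ℝ)),
          hmass.setIntegral_eq ⟨le_rfl, ht.1.trans ht.2⟩ ht ht.1 MeasurableSet.univ]

lemma abs_setIntegral_pairF_le [IsFiniteMeasure Q]
    (hmass : IsMartOn ℱ Q 0 T (fun t ω => ((μ t ω).mass : ℝ)))
    {ψ : ℝ → ℝ} {C : ℝ} (hC : ∀ x ∈ Icc 0 T, |ψ x| ≤ C)
    {t : ℝ} (ht : t ∈ Icc 0 T) (A : Set Ω) :
    |∫ ω in A, pairF ψ (μ t ω) ∂Q| ≤ C * ∫ ω, ((μ 0 ω).mass : ℝ) ∂Q :=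
  abs_integral_le_integral_abs.trans (setIntegral_abs_pairF_le hmass hC ht A)

lemma tendsto_setIntegral_pairF
    (hprog : ProgressivePairing ℱ μ)
    (hmass : IsMartOn ℱ Q 0 T (fun t ω => ((μ t ω).mass : ℝ)))
    {g : ℕ → ℝ → ℝ} {f : ℝ → ℝ} {C : ℝ} (hg : ∀ n, Measurable (g n))
    (hC : ∀ n, ∀ x ∈ Icc 0 T, |g n x| ≤ C)
    (hlim : ∀ x ∈ Icc 0 T, Tendsto (g · x) atTop (𝓝 (f x))) {t : ℝ} (ht : t ∈ Icc 0 T)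
    (A : Set Ω) :
    Tendsto (fun n => ∫ ω in A, pairF (g n) (μ t ω) ∂Q) atTop
      (𝓝 (∫ ω in A, pairF f (μ t ω) ∂Q)) :=
  tendsto_integral_of_dominated_convergence (fun ω => C * (μ t ω).mass)
    (fun n => (((hprog _ (hg n)).stronglyAdapted t).mono (ℱ.le t)).aestronglyMeasurable.restrict)
    ((hmass.1 t ht).1.const_mul C).restrict
    (fun n => Eventually.of_forall fun ω => abs_pairF_le (hC n) (μ t ω))
    (Eventually.of_forall fun ω => tendsto_pairF hg hC hlim (μ t ω))

lemma stronglyMeasurable_pairF_min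
    (hprog : ProgressivePairing ℱ μ)
    {ψ : ℝ → ℝ} (hψ : Measurable ψ) :
    StronglyMeasurable (fun p : ℝ × Ω => pairF ψ (μ (min p.1 T) p.2)) :=
  ((hprog ψ hψ T).mono (sup_le_sup le_rfl (MeasurableSpace.comap_mono (ℱ.le T)))).comp_measurable
    (g := fun p : ℝ × Ω => ((⟨min p.1 T, mem_Iic.2 (min_le_right _ _)⟩ : Iic T), p.2))
    ((measurable_fst.min measurable_const).subtype_mk.prodMk measurable_snd)

lemma integrable_pairF_prod [IsFiniteMeasure Q]
    (hprog : ProgressivePairing ℱ μ)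
    (hmass : IsMartOn ℱ Q 0 T (fun t ω => ((μ t ω).mass : ℝ)))
    {ψ : ℝ → ℝ} (hψ : Measurable ψ) {C : ℝ} (hC : ∀ x ∈ Icc 0 T, |ψ x| ≤ C) :
    Integrable (fun p : ℝ × Ω => pairF ψ (μ p.1 p.2)) ((volume.restrict (Icc 0 T)).prod Q) := by
  have hmeas : AEStronglyMeasurable (fun p : ℝ × Ω => pairF ψ (μ p.1 p.2))
      ((volume.restrict (Icc 0 T)).prod Q) := by
    refine (stronglyMeasurable_pairF_min hprog hψ).aestronglyMeasurable.congr ?_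
    filter_upwards [Measure.quasiMeasurePreserving_fst.ae (ae_restrict_mem measurableSet_Icc)]
      with p hp
    rw [min_eq_left hp.2]
  refine (integrable_prod_iff hmeas).2 ⟨?_, ?_⟩
  · filter_upwards [ae_restrict_mem measurableSet_Icc] with t ht
    exact integrable_pairF hprog hmass hψ hC ht
  · refine (integrable_const (C * ∫ ω, ((μ 0 ω).mass : ℝ) ∂Q)).mono'
      hmeas.norm.integral_prod_right' ?_
    filter_upwards [ae_restrict_mem measurableSet_Icc] with t ht
    simpa [Real.norm_eq_abs, abs_of_nonneg (integral_nonneg fun ω => abs_nonneg _)] using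
      setIntegral_abs_pairF_le hmass hC ht univ

lemma setIntegral_intervalIntegral_pairF_sub [IsFiniteMeasure Q]
    (hprog : ProgressivePairing ℱ μ)
    (hmass : IsMartOn ℱ Q 0 T (fun t ω => ((μ t ω).mass : ℝ)))
    {ψ : ℝ → ℝ} (hψ : Measurable ψ) {C : ℝ} (hC : ∀ x ∈ Icc 0 T, |ψ x| ≤ C)
    {r r' : ℝ} (hr : 0 ≤ r) (hrr' : r ≤ r') (hr' : r' ≤ T) (A : Set Ω) :
    ∫ ω in A, ((∫ v in (0:ℝ)..r', pairF ψ (μ v ω)) - ∫ v in (0:ℝ)..r, pairF ψ (μ v ω)) ∂Q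
      = ∫ v in r..r', ∫ ω in A, pairF ψ (μ v ω) ∂Q := by
  have hprod := integrable_pairF_prod hprog hmass hψ hC
  have hsub : (fun ω => (∫ v in (0:ℝ)..r', pairF ψ (μ v ω)) - ∫ v in (0:ℝ)..r, pairF ψ (μ v ω))
      =ᵐ[Q.restrict A] fun ω => ∫ v in Ioc r r', pairF ψ (μ v ω) := by
    filter_upwards [ae_restrict_of_ae hprod.prod_left_ae] with ω hω
    change IntegrableOn (fun v => pairF ψ (μ v ω)) (Icc 0 T) at hω
    have hint : ∀ {b}, b ∈ Icc 0 T →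
        IntervalIntegrable (fun v => pairF ψ (μ v ω)) volume 0 b := fun hb =>
      (hω.mono_set (by rw [uIcc_of_le hb.1]; exact Icc_subset_Icc le_rfl hb.2)).intervalIntegrable
    rw [intervalIntegral.integral_interval_sub_left (hint ⟨hr.trans hrr', hr'⟩)
      (hint ⟨hr, hrr'.trans hr'⟩), intervalIntegral.integral_of_le hrr']
  have hIoc : Ioc r r' ⊆ Icc 0 T := fun v hv => ⟨hr.trans hv.1.le, hv.2.trans hr'⟩
  rw [integral_congr_ae hsub, intervalIntegral.integral_of_le hrr']
  exact integral_integral_swap (hprod.mono_measure (Measure.prod_mono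
    (Measure.restrict_mono hIoc le_rfl) Measure.restrict_le_self)).swap

lemma setIntegral_pairF_sub_eq_neg_integral [IsFiniteMeasure Q]
    (hprog : ProgressivePairing ℱ μ)
    (hmass : IsMartOn ℱ Q 0 T (fun t ω => ((μ t ω).mass : ℝ)))
    {φ ψ : ℝ → ℝ} (hφ : Continuous φ) (hψ : Continuous ψ)
    (hX : IsMartOn ℱ Q 0 T (fun t ω => pairF φ (μ t ω) + ∫ s in (0:ℝ)..t, pairF ψ (μ s ω)))
    {r r' : ℝ} (hr : 0 ≤ r) (hrr' : r ≤ r') (hr' : r' ≤ T) {A : Set Ω}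
    (hA : MeasurableSet[ℱ r] A) :
    ∫ ω in A, pairF φ (μ r' ω) ∂Q - ∫ ω in A, pairF φ (μ r ω) ∂Q
      = -∫ v in r..r', ∫ ω in A, pairF ψ (μ v ω) ∂Q := by
  obtain ⟨C, hC⟩ := exists_abs_le_of_continuousOn (hφ.continuousOn (s := Icc 0 T))
  obtain ⟨C', hC'⟩ := exists_abs_le_of_continuousOn (hψ.continuousOn (s := Icc 0 T))
  have hrT : r ∈ Icc 0 T := ⟨hr, hrr'.trans hr'⟩
  have hr'T : r' ∈ Icc 0 T := ⟨hr.trans hrr', hr'⟩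
  have hφint : ∀ {t}, t ∈ Icc 0 T → Integrable (fun ω => pairF φ (μ t ω)) Q :=
    integrable_pairF hprog hmass hφ.measurable hC
  have hdrift : ∀ {t}, t ∈ Icc 0 T →
      Integrable (fun ω => ∫ v in (0:ℝ)..t, pairF ψ (μ v ω)) Q := fun ht =>
    ((hX.1 _ ht).1.sub (hφint ht)).congr (Eventually.of_forall fun ω => by simp)
  have hmart := hX.setIntegral_eq hrT hr'T hrr' hA
  rw [integral_add (hφint hr'T).restrict (hdrift hr'T).restrict,
    integral_add (hφint hrT).restrict (hdrift hrT).restrict] at hmart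
  rw [← setIntegral_intervalIntegral_pairF_sub hprog hmass hψ.measurable hC' hr hrr' hr',
    integral_sub (hdrift hr'T).restrict (hdrift hrT).restrict]
  linarith

lemma setIntegral_pairF_comp_add_sub [IsFiniteMeasure Q]
    (hprog : ProgressivePairing ℱ μ)
    (hHJM : HJMdriftMart ℱ Q μ)
    {g : ℝ → ℝ} (hg : ContDiff ℝ (⊤ : ℕ∞) g) {u : ℝ} (hu : deriv g u = 0)
    {r r' : ℝ} (hr : 0 ≤ r) (hrr' : r ≤ r') (hr' : r' ≤ T) {A : Set Ω}
    (hA : MeasurableSet[ℱ r] A) :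
    ∫ ω in A, pairF (fun x => g (u + x)) (μ r' ω) ∂Q
        - ∫ ω in A, pairF (fun x => g (u + x)) (μ r ω) ∂Q
      = -∫ v in r..r', ∫ ω in A, pairF (fun x => deriv g (u + x)) (μ v ω) ∂Q := by
  have hX := hHJM _ (memD1_comp_const_add hg hu)
  rw [show deriv (fun x => g (u + x)) = fun x => deriv g (u + x) from
    funext fun x => deriv_comp_const_add g u x] at hX
  exact setIntegral_pairF_sub_eq_neg_integral hprog (isMartOn_mass hHJM)
    (hg.continuous.comp (continuous_const.add continuous_id))
    ((hg.continuous_deriv (by simp)).comp (continuous_const.add continuous_id)) hX hr hrr' hr' hA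

lemma hasDerivAt_setIntegral_pairF_comp_add
    (hprog : ProgressivePairing ℱ μ)
    (hmass : IsMartOn ℱ Q 0 T (fun t ω => ((μ t ω).mass : ℝ)))
    {g : ℝ → ℝ} (hg : ContDiff ℝ 1 g) {t : ℝ} (ht : t ∈ Icc 0 T) (A : Set Ω) (u₀ : ℝ) :
    HasDerivAt (fun u => ∫ ω in A, pairF (fun x => g (u + x)) (μ t ω) ∂Q)
      (∫ ω in A, pairF (fun x => deriv g (u₀ + x)) (μ t ω) ∂Q) u₀ := by
  have hg' : Continuous (deriv g) := hg.continuous_deriv le_rfl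
  have hshift : ∀ {f : ℝ → ℝ}, Continuous f → ∀ u : ℝ, Measurable fun x => f (u + x) :=
    fun hf u => (hf.comp (continuous_const.add continuous_id)).measurable
  obtain ⟨K, hK⟩ := exists_abs_le_of_continuousOn (a := u₀ - 1) (b := u₀ + 1 + T)
    hg'.continuousOn
  obtain ⟨K₀, hK₀⟩ := exists_abs_le_of_continuousOn (a := u₀) (b := u₀ + T)
    hg.continuous.continuousOn
  have hbound : ∀ u ∈ Metric.ball u₀ 1, ∀ x ∈ Icc 0 T, |deriv g (u + x)| ≤ K := by
    intro u hu x hx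
    have := abs_lt.1 (Real.dist_eq u u₀ ▸ Metric.mem_ball.1 hu)
    exact hK _ ⟨by linarith [hx.1], by linarith [hx.2]⟩
  have hadapt : ∀ {f : ℝ → ℝ}, Measurable f →
      AEStronglyMeasurable (fun ω => pairF f (μ t ω)) (Q.restrict A) := fun hf =>
    (((hprog _ hf).stronglyAdapted t).mono (ℱ.le t)).aestronglyMeasurable.restrict
  refine (hasDerivAt_integral_of_dominated_loc_of_deriv_le (Metric.ball_mem_nhds u₀ one_pos)
    (Eventually.of_forall fun u => hadapt (hshift hg.continuous u))
    (integrable_pairF hprog hmass (hshift hg.continuous u₀)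
      (fun x hx => hK₀ _ ⟨by linarith [hx.1], by linarith [hx.2]⟩) ht).restrict
    (hadapt (hshift hg' u₀))
    (Eventually.of_forall fun ω u hu => abs_pairF_le (hbound u hu) (μ t ω))
    ((hmass.1 t ht).1.const_mul K).restrict
    (Eventually.of_forall fun ω u _ => hasDerivAt_pairF_comp_add hg (μ t ω) u)).2

lemma integral_setIntegral_pairF_deriv_comp_add
    (hprog : ProgressivePairing ℱ μ)
    (hmass : IsMartOn ℱ Q 0 T (fun t ω => ((μ t ω).mass : ℝ)))
    {g : ℝ → ℝ} (hg : ContDiff ℝ 2 g) {t : ℝ} (ht : t ∈ Icc 0 T) (A : Set Ω) (u u' : ℝ) :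
    ∫ v in u..u', ∫ ω in A, pairF (fun x => deriv g (v + x)) (μ t ω) ∂Q
      = ∫ ω in A, pairF (fun x => g (u' + x)) (μ t ω) ∂Q
        - ∫ ω in A, pairF (fun x => g (u + x)) (μ t ω) ∂Q := by
  have hg' : ContDiff ℝ 1 (deriv g) := (contDiff_succ_iff_deriv.1 hg).2.2
  have hderiv := hasDerivAt_setIntegral_pairF_comp_add hprog hmass (hg.of_le one_le_two) ht A
  refine intervalIntegral.integral_eq_sub_of_hasDerivAt (fun v _ => hderiv v)
    (Continuous.intervalIntegrable ?_ u u')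
  exact continuous_iff_continuousAt.2 fun v =>
    (hasDerivAt_setIntegral_pairF_comp_add hprog hmass hg' ht A v).continuousAt

theorem setIntegral_pairF_comp_add_eq [IsFiniteMeasure Q]
    (hprog : ProgressivePairing ℱ μ)
    (hHJM : HJMdriftMart ℱ Q μ)
    {G : ℝ → ℝ} (hG : ContDiff ℝ (⊤ : ℕ∞) G) {s t : ℝ} (hs : 0 ≤ s) (hst : s ≤ t) (ht : t ≤ T)
    (hG0 : EqOn G 0 (Iic t)) {A : Set Ω} (hA : MeasurableSet[ℱ s] A) :
    ∫ ω in A, pairF (fun x => G (t + x)) (μ t ω) ∂Q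
      = ∫ ω in A, pairF (fun x => G (s + x)) (μ s ω) ∂Q := by
  have hmass := isMartOn_mass hHJM
  set Φ : (ℝ → ℝ) → ℝ → ℝ → ℝ := fun g u τ => ∫ ω in A, pairF (fun x => g (u + x)) (μ τ ω) ∂Q
  have hI : ∀ {τ}, τ ∈ Icc s t → τ ∈ Icc 0 T := fun hτ => ⟨hs.trans hτ.1, hτ.2.trans ht⟩
  have hspace : ∀ g, ContDiff ℝ (⊤ : ℕ∞) g → ∀ τ ∈ Icc s t, ∀ u ∈ Icc s t, ∀ u' ∈ Icc s t,
      Φ g u' τ - Φ g u τ = ∫ v in u..u', Φ (deriv g) v τ := fun g hg τ hτ u _ u' _ =>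
    (integral_setIntegral_pairF_deriv_comp_add hprog hmass (hg.of_le (WithTop.coe_le_coe.2 le_top))
      (hI hτ) A u u').symm
  have htime : ∀ g, ContDiff ℝ (⊤ : ℕ∞) g → EqOn (deriv g) 0 (Iic t) →
      ∀ u ∈ Icc s t, ∀ τ ∈ Icc s t, ∀ τ' ∈ Icc s t, τ ≤ τ' →
      Φ g u τ' - Φ g u τ = -∫ v in τ..τ', Φ (deriv g) u v :=
    fun g hg hg0 u hu τ hτ τ' hτ' hττ' => setIntegral_pairF_comp_add_sub hprog hHJM hg
      (hg0 hu.2) (hs.trans hτ.1) hττ' (hτ'.2.trans ht) (ℱ.mono hτ.1 A hA)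
  have hG' : ContDiff ℝ (⊤ : ℕ∞) (deriv G) := (contDiff_infty_iff_deriv.1 hG).2
  have hG'' : ContDiff ℝ (⊤ : ℕ∞) (deriv (deriv G)) := (contDiff_infty_iff_deriv.1 hG').2
  have hG'0 := eqOn_deriv_zero_of_eqOn_Iic (hG.differentiable (by simp)) hG0
  have hG''0 := eqOn_deriv_zero_of_eqOn_Iic (hG'.differentiable (by simp)) hG'0
  obtain ⟨K, hK⟩ := exists_abs_le_of_continuousOn (a := s) (b := t + T) hG''.continuous.continuousOn
  set L := (K * ∫ ω, ((μ 0 ω).mass : ℝ) ∂Q).toNNReal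
  have hbound : ∀ u ∈ Icc s t, ∀ τ ∈ Icc s t, |Φ (deriv (deriv G)) u τ| ≤ L :=
    fun u hu τ hτ => (abs_setIntegral_pairF_le hmass
      (fun x hx => hK _ ⟨by linarith [hu.1, hx.1], by linarith [hu.2, hx.2]⟩) (hI hτ) A).trans
      (Real.le_coe_toNNReal _)
  exact diag_eq_of_transport hst (hspace G hG) (htime G hG hG'0)
    (fun τ hτ => lipschitzOnWith_of_sub_eq_integral
      (fun u hu u' hu' _ => hspace _ hG' τ hτ u hu u' hu') (fun u hu => hbound u hu τ hτ))
    (fun u hu => lipschitzOnWith_of_sub_eq_integral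
      (fun τ hτ τ' hτ' hττ' => (htime _ hG' hG''0 u hu τ hτ τ' hτ' hττ').trans
        intervalIntegral.integral_neg.symm)
      (fun τ hτ => (abs_neg _).trans_le (hbound u hu τ hτ)))

theorem setIntegral_pairF_indicator_comp_add_eq [IsFiniteMeasure Q]
    (hprog : ProgressivePairing ℱ μ) (hHJM : HJMdriftMart ℱ Q μ)
    {w : ℝ → ℝ} (hw : ContDiff ℝ (⊤ : ℕ∞) w) {τ₁ τ₂ : ℝ} (hτ₁T : τ₁ ≤ T) {s t : ℝ}
    (hs : s ∈ Icc 0 τ₁) (ht : t ∈ Icc 0 τ₁) (hst : s ≤ t) {A : Set Ω}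
    (hA : MeasurableSet[ℱ s] A) :
    ∫ ω in A, pairF (fun x => indicator (Ioc τ₁ τ₂) w (t + x)) (μ t ω) ∂Q
      = ∫ ω in A, pairF (fun x => indicator (Ioc τ₁ τ₂) w (s + x)) (μ s ω) ∂Q := by
  obtain ⟨g, hg, hg0, hgw, hglim⟩ := exists_smooth_tendsto_indicator_Ioc hw τ₁ τ₂
  obtain ⟨C, hC⟩ := exists_abs_le_of_continuousOn (a := 0) (b := τ₁ + T)
    hw.continuous.continuousOn
  have hlim : ∀ r ∈ Icc 0 τ₁,
      Tendsto (fun n => ∫ ω in A, pairF (fun x => g n (r + x)) (μ r ω) ∂Q) atTop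
        (𝓝 (∫ ω in A, pairF (fun x => indicator (Ioc τ₁ τ₂) w (r + x)) (μ r ω) ∂Q)) :=
    fun r hr => tendsto_setIntegral_pairF hprog (isMartOn_mass hHJM)
      (fun n => (hg n).continuous.measurable.comp (measurable_const_add r))
      (fun n x hx => (hgw n _).trans (hC _ ⟨add_nonneg hr.1 hx.1, add_le_add hr.2 hx.2⟩))
      (fun x _ => hglim (r + x)) ⟨hr.1, hr.2.trans hτ₁T⟩ A
  refine tendsto_nhds_unique ((hlim t ht).congr fun n => ?_) (hlim s hs)
  exact setIntegral_pairF_comp_add_eq hprog hHJM (hg n) hs.1 hst (ht.2.trans hτ₁T)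
    ((hg0 n).mono (Iic_subset_Iic.2 ht.2)) hA

end DriftCondition

theorem stmt0_general {T : ℝ}
    {Ω : Type*} {m0 : MeasurableSpace Ω} (ℱ : Filtration ℝ m0)
    (Q : Measure Ω) [IsProbabilityMeasure Q]
    (μ : ℝ → Ω → MV T)
    (hprog : ∀ φ : ℝ → ℝ, Measurable φ →
      ProgMeasurable ℱ (fun t ω => pairF φ (μ t ω)))
    (hHJM : ∀ φ : ℝ → ℝ, memD1 φ →
      IsMartOn ℱ Q 0 T (fun t ω =>
        pairF φ (μ t ω) + ∫ s in (0:ℝ)..t, pairF (deriv φ) (μ s ω)))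
    (τ₁ τ₂ : ℝ) (hτ : τ₁ < τ₂) (hτ₂ : τ₂ ≤ T)
    (w : ℝ → ℝ) (hw : ContDiff ℝ (⊤ : ℕ∞) w) :
    IsMartOn ℱ Q 0 τ₁ (fun t ω =>
      pairF (fun x => Set.indicator (Set.Ioc τ₁ τ₂) w (t + x)) (μ t ω)) := by
  have hτ₁T : τ₁ ≤ T := hτ.le.trans hτ₂
  obtain ⟨C, hC⟩ := exists_abs_le_of_continuousOn (a := 0) (b := τ₁ + T)
    hw.continuous.continuousOn
  have hF : ∀ t, Measurable fun x => indicator (Ioc τ₁ τ₂) w (t + x) := fun t =>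
    (hw.continuous.measurable.indicator measurableSet_Ioc).comp (measurable_const_add t)
  refine isMartOn_of_setIntegral_eq (fun t ht => ?_)
    (fun t _ => IsStronglyProgressive.stronglyAdapted (hprog _ (hF t)) t)
    fun s hs t ht hst A hA =>
      setIntegral_pairF_indicator_comp_add_eq hprog hHJM hw hτ₁T hs ht hst hA
  exact integrable_pairF hprog (isMartOn_mass hHJM) (hF t)
    (fun x hx => (norm_indicator_le_norm_self w _).trans
      (hC _ ⟨add_nonneg ht.1 hx.1, add_le_add ht.2 hx.2⟩)) ⟨ht.1, ht.2.trans hτ₁T⟩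

/-- **Theorem 3.1.** If `(μ_t)` is an `M₊(E)`-valued progressively measurable process with
`E_Q[sup_t μ_t(E)] < ∞` such that for every `φ ∈ D₁` the process
`⟨φ, μ_t⟩ + ∫_0^t ⟨φ', μ_s⟩ ds` is a `Q`-martingale on `[0,T]`, then for all
`0 ≤ τ₁ < τ₂ ≤ T` and every smooth weight `w`, the future price process
`F(t,τ₁,τ₂) = ∫_E w(t+x) 1_{(τ₁,τ₂]}(t+x) μ_t(dx)` is a `Q`-martingale on `[0,τ₁]`
(whence the market satisfies NAFLVR). -/
theorem stmt0 {T : ℝ} (hT : 0 < T)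
    {Ω : Type*} {m0 : MeasurableSpace Ω} (ℱ : Filtration ℝ m0)
    (Q : Measure Ω) [IsProbabilityMeasure Q]
    (μ : ℝ → Ω → MV T)
    (hprog : ∀ φ : ℝ → ℝ, Measurable φ →
      ProgMeasurable ℱ (fun t ω => pairF φ (μ t ω)))
    (hsup : Integrable (fun ω => ⨆ t : Icc (0:ℝ) T, ((μ (t : ℝ) ω).mass : ℝ)) Q)
    (hHJM : ∀ φ : ℝ → ℝ, memD1 φ →
      IsMartOn ℱ Q 0 T (fun t ω =>
        pairF φ (μ t ω) + ∫ s in (0:ℝ)..t, pairF (deriv φ) (μ s ω)))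
    (τ₁ τ₂ : ℝ) (hτ₁ : 0 ≤ τ₁) (hτ : τ₁ < τ₂) (hτ₂ : τ₂ ≤ T)
    (w : ℝ → ℝ) (hw : ContDiff ℝ (⊤ : ℕ∞) w) :
    IsMartOn ℱ Q 0 τ₁ (fun t ω =>
      pairF (fun x => Set.indicator (Set.Ioc τ₁ τ₂) w (t + x)) (μ t ω)) :=
  stmt0_general ℱ Q μ hprog hHJM τ₁ τ₂ hτ hτ₂ w hw
end
end

section
/- Let α ∈ C([0,T]) be non-negative and let g be the restriction to [0,T] of a C^∞ function on ℝ with g ≤ 0 on [0,T] and g'(0) = 0. Define ψ_t(x) := g((x−t)^+) / (1 − g((x−t)^+) ∫_0^t ½ α((x−s)^+) ds) for t, x ∈ [0,T]. Then the denominator is always ≥ 1 (so ψ is well defined), ψ_0 = g, each map x ↦ ψ_t(x) is non-positive and differentiable with ∂_x ψ_t(0) = 0, and ψ solves the Riccati PDE: for all t ∈ [0,T] and x ∈ [0,T], ∂_t ψ_t(x) = −∂_x ψ_t(x) + ½ α(x) ψ_t(x)² (explicit solution part of Theorem 5.12). -/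
/-!
Write `G v := g (v⁺)` and let `H` be a primitive of `h := ½ α` (extended continuously to `ℝ`).
After the substitution `σ = x - s` the integral becomes `H x - H (x - t)`, so
`ψ_t(x) = N / (1 - N J)` with `N = G (x - t)` and `J = H x - H (x - t)`. Along the
characteristics `(∂_t + ∂_x) N = 0` and `(∂_t + ∂_x) J = h x`, hence
`(∂_t + ∂_x) ψ = N² h x / (1 - N J)² = h x ψ²`, which is the Riccati equation. Since
`g ≤ 0` and `α ≥ 0`, the denominator is at least `1`. At `x = 0` both `G'(-t)` and
`h 0 - h (-t)` vanish, because `G` and the extension of `α` are constant on `(-∞, 0]`.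
-/

open Set

noncomputable section

lemma hasDerivAt_comp_max_zero {g : ℝ → ℝ} (hg : Differentiable ℝ g) (hg0 : deriv g 0 = 0)
    (y : ℝ) : HasDerivAt (fun v => g (max v 0)) (if 0 < y then deriv g y else 0) y := by
  rcases lt_trichotomy y 0 with hy | rfl | hy
  · rw [if_neg (lt_asymm hy)]
    refine (hasDerivAt_const y (g 0)).congr_of_eventuallyEq ?_
    filter_upwards [Iio_mem_nhds hy] with v hv
    rw [max_eq_right hv.le]
  · rw [if_neg (lt_irrefl 0), ← hasDerivWithinAt_univ, ← Iic_union_Ici]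
    refine HasDerivWithinAt.union ?_ ?_
    · exact (hasDerivWithinAt_const (0:ℝ) _ (g 0)).congr (fun v hv => by rw [max_eq_right hv])
        (by rw [max_self])
    · have hg0' : HasDerivAt g 0 0 := (hg 0).hasDerivAt.congr_deriv hg0
      exact hg0'.hasDerivWithinAt.congr (fun v hv => by rw [max_eq_left hv]) (by rw [max_self])
  · rw [if_pos hy]
    refine (hg y).hasDerivAt.congr_of_eventuallyEq ?_
    filter_upwards [Ioi_mem_nhds hy] with v hv
    rw [max_eq_left hv.le]

lemma integral_comp_sub_left_eq_sub {h : ℝ → ℝ} (hh : Continuous h) (t x : ℝ) :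
    ∫ s in (0:ℝ)..t, h (x - s) = (∫ σ in (0:ℝ)..x, h σ) - ∫ σ in (0:ℝ)..(x - t), h σ := by
  rw [intervalIntegral.integral_comp_sub_left, sub_zero,
    intervalIntegral.integral_interval_sub_left (hh.intervalIntegrable _ _)
      (hh.intervalIntegrable _ _)]

lemma max_sub_zero_mem_Icc {T x s : ℝ} (hT : 0 ≤ T) (hx : x ≤ T) (hs : 0 ≤ s) :
    max (x - s) 0 ∈ Icc 0 T :=
  ⟨le_max_right _ _, max_le (by linarith) hT⟩

def riccatiSol (G H : ℝ → ℝ) (t x : ℝ) : ℝ :=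
  G (x - t) / (1 - G (x - t) * (H x - H (x - t)))

def riccatiSolDerivX (G G' H h : ℝ → ℝ) (t x : ℝ) : ℝ :=
  (G' (x - t) * (1 - G (x - t) * (H x - H (x - t))) +
      G (x - t) * (G' (x - t) * (H x - H (x - t)) + G (x - t) * (h x - h (x - t)))) /
    (1 - G (x - t) * (H x - H (x - t))) ^ 2

section Riccati

variable {G G' H h : ℝ → ℝ}

lemma hasDerivAt_riccatiSol_x (hG : ∀ v, HasDerivAt G (G' v) v) (hH : ∀ v, HasDerivAt H (h v) v)
    {t x : ℝ} (hD : 1 - G (x - t) * (H x - H (x - t)) ≠ 0) :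
    HasDerivAt (riccatiSol G H t) (riccatiSolDerivX G G' H h t x) x := by
  have hN : HasDerivAt (fun y => G (y - t)) (G' (x - t)) x := (hG (x - t)).comp_sub_const x t
  have hJ : HasDerivAt (fun y => H y - H (y - t)) (h x - h (x - t)) x :=
    (hH x).sub ((hH (x - t)).comp_sub_const x t)
  refine (hN.div ((hN.mul hJ).const_sub 1) hD).congr_deriv ?_
  simp only [riccatiSolDerivX, Pi.mul_apply]
  ring

lemma hasDerivAt_riccatiSol_t (hG : ∀ v, HasDerivAt G (G' v) v) (hH : ∀ v, HasDerivAt H (h v) v)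
    {t x : ℝ} (hD : 1 - G (x - t) * (H x - H (x - t)) ≠ 0) :
    HasDerivAt (fun τ => riccatiSol G H τ x)
      (-riccatiSolDerivX G G' H h t x + h x * riccatiSol G H t x ^ 2) t := by
  have hN : HasDerivAt (fun τ => G (x - τ)) (-G' (x - t)) t := (hG (x - t)).comp_const_sub x t
  have hJ : HasDerivAt (fun τ => H x - H (x - τ)) (h (x - t)) t := by
    simpa using ((hH (x - t)).comp_const_sub x t).const_sub (H x)
  refine (hN.div ((hN.mul hJ).const_sub 1) hD).congr_deriv ?_
  simp only [riccatiSolDerivX, riccatiSol, Pi.mul_apply]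
  field_simp
  ring

lemma riccatiSolDerivX_zero {t : ℝ} (hG' : G' (0 - t) = 0) (hh : h 0 = h (0 - t)) :
    riccatiSolDerivX G G' H h t 0 = 0 := by
  rw [riccatiSolDerivX, hG', hh, sub_self]
  simp

end Riccati

lemma IccExtend_domRestrict_eq_max {α : ℝ → ℝ} {T : ℝ} (hT : 0 ≤ T) {v : ℝ} (hv : v ≤ T) :
    IccExtend hT ((Icc 0 T).domRestrict α) v = α (max v 0) := by
  show α (max 0 (min T v)) = _
  rw [min_eq_right hv, max_comm]

lemma integral_half_mul_comp_max_eq_sub {α : ℝ → ℝ} {T t x : ℝ} (hT : 0 ≤ T)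
    (hαc : ContinuousOn α (Icc 0 T)) (ht : 0 ≤ t) (hx : x ≤ T) :
    ∫ s in (0:ℝ)..t, 1 / 2 * α (max (x - s) 0) =
      (∫ σ in (0:ℝ)..x, 1 / 2 * IccExtend hT ((Icc 0 T).domRestrict α) σ) -
        ∫ σ in (0:ℝ)..(x - t), 1 / 2 * IccExtend hT ((Icc 0 T).domRestrict α) σ := by
  have hc : Continuous fun σ => 1 / 2 * IccExtend hT ((Icc 0 T).domRestrict α) σ :=
    continuous_const.mul hαc.domRestrict.Icc_extend'
  rw [← integral_comp_sub_left_eq_sub hc]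
  refine intervalIntegral.integral_congr fun s hs => ?_
  rw [uIcc_of_le ht] at hs
  rw [IccExtend_domRestrict_eq_max hT (by linarith [hs.1])]

lemma one_le_one_sub_mul_integral {α g : ℝ → ℝ} {T t x : ℝ}
    (hα0 : ∀ x ∈ Icc 0 T, 0 ≤ α x) (hgneg : ∀ x ∈ Icc 0 T, g x ≤ 0)
    (ht : t ∈ Icc 0 T) (hx : x ∈ Icc 0 T) :
    1 ≤ 1 - g (max (x - t) 0) * ∫ s in (0:ℝ)..t, 1 / 2 * α (max (x - s) 0) := by
  have hT : 0 ≤ T := hx.1.trans hx.2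
  refine (le_sub_self_iff 1).2 (mul_nonpos_of_nonpos_of_nonneg ?_ ?_)
  · exact hgneg _ (max_sub_zero_mem_Icc hT hx.2 ht.1)
  · refine intervalIntegral.integral_nonneg ht.1 fun s hs => ?_
    exact mul_nonneg (by norm_num) (hα0 _ (max_sub_zero_mem_Icc hT hx.2 hs.1))

/-- **Explicit Riccati solution (part of Theorem 5.12).** For non-negative `α ∈ C([0,T])`
and `g` (restriction of a) smooth non-positive function with `g'(0) = 0`, the function
`ψ_t(x) = g((x−t)⁺) / (1 − g((x−t)⁺) ∫_0^t ½ α((x−s)⁺) ds)` is well defined (denominator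
`≥ 1`), satisfies `ψ_0 = g`, is non-positive, differentiable in `x` with `∂_x ψ_t(0) = 0`,
and solves the Riccati PDE `∂_t ψ_t(x) = −∂_x ψ_t(x) + ½ α(x) ψ_t(x)²` on `[0,T]²`. -/
theorem stmt7 {T : ℝ} (hT : 0 < T) (α g : ℝ → ℝ)
    (hαc : ContinuousOn α (Icc (0:ℝ) T)) (hα0 : ∀ x ∈ Icc (0:ℝ) T, 0 ≤ α x)
    (hg : ContDiff ℝ (⊤ : ℕ∞) g) (hgneg : ∀ x ∈ Icc (0:ℝ) T, g x ≤ 0)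
    (hg0 : deriv g 0 = 0)
    (ψ : ℝ → ℝ → ℝ)
    (hψ : ∀ t x : ℝ, ψ t x =
      g (max (x - t) 0) /
        (1 - g (max (x - t) 0) * ∫ s in (0:ℝ)..t, (1/2) * α (max (x - s) 0))) :
    (∀ t ∈ Icc (0:ℝ) T, ∀ x ∈ Icc (0:ℝ) T,
      1 ≤ 1 - g (max (x - t) 0) * ∫ s in (0:ℝ)..t, (1/2) * α (max (x - s) 0)) ∧
    (∀ x ∈ Icc (0:ℝ) T, ψ 0 x = g x) ∧
    (∀ t ∈ Icc (0:ℝ) T, ∀ x ∈ Icc (0:ℝ) T, ψ t x ≤ 0) ∧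
    (∃ ψx : ℝ → ℝ → ℝ,
      (∀ t ∈ Icc (0:ℝ) T, ∀ x ∈ Icc (0:ℝ) T,
        HasDerivWithinAt (fun y => ψ t y) (ψx t x) (Icc (0:ℝ) T) x) ∧
      (∀ t ∈ Icc (0:ℝ) T, ψx t 0 = 0) ∧
      (∀ t ∈ Icc (0:ℝ) T, ∀ x ∈ Icc (0:ℝ) T,
        HasDerivWithinAt (fun τ => ψ τ x)
          (-(ψx t x) + (1/2) * α x * (ψ t x)^2) (Icc (0:ℝ) T) t)) := by
  set h : ℝ → ℝ := fun σ => 1 / 2 * IccExtend hT.le ((Icc 0 T).domRestrict α) σ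
  set H : ℝ → ℝ := fun y => ∫ σ in (0:ℝ)..y, h σ
  set G : ℝ → ℝ := fun v => g (max v 0)
  set G' : ℝ → ℝ := fun v => if 0 < v then deriv g v else 0
  have hH : ∀ y, HasDerivAt H (h y) y := fun y =>
    ((continuous_const.mul hαc.domRestrict.Icc_extend').integral_hasStrictDerivAt 0 y).hasDerivAt
  have hG : ∀ v, HasDerivAt G (G' v) v :=
    hasDerivAt_comp_max_zero (hg.differentiable (by simp)) hg0
  have hψ' : ∀ t ∈ Icc 0 T, ∀ x ∈ Icc 0 T, ψ t x = riccatiSol G H t x := fun t ht x hx => by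
    rw [hψ, integral_half_mul_comp_max_eq_sub hT.le hαc ht.1 hx.2]
    rfl
  have hD : ∀ t ∈ Icc 0 T, ∀ x ∈ Icc 0 T, 1 - G (x - t) * (H x - H (x - t)) ≠ 0 :=
    fun t ht x hx => by
      have := one_le_one_sub_mul_integral hα0 hgneg ht hx
      rw [integral_half_mul_comp_max_eq_sub hT.le hαc ht.1 hx.2] at this
      exact (zero_lt_one.trans_le this).ne'
  refine ⟨fun t ht x hx => one_le_one_sub_mul_integral hα0 hgneg ht hx,
    fun x hx => by simp [hψ, max_eq_left hx.1], fun t ht x hx => ?_, riccatiSolDerivX G G' H h,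
    fun t ht x hx => ?_, fun t ht => ?_, fun t ht x hx => ?_⟩
  · rw [hψ]
    exact div_nonpos_of_nonpos_of_nonneg (hgneg _ (max_sub_zero_mem_Icc hT.le hx.2 ht.1))
      (zero_le_one.trans (one_le_one_sub_mul_integral hα0 hgneg ht hx))
  · exact (hasDerivAt_riccatiSol_x hG hH (hD t ht x hx)).hasDerivWithinAt.congr
      (fun y hy => hψ' t ht y hy) (hψ' t ht x hx)
  · refine riccatiSolDerivX_zero (if_neg (by linarith [ht.1])) ?_
    simp only [h, IccExtend_of_le_left _ _ (by linarith [ht.1] : 0 - t ≤ 0), IccExtend_left]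
  · have hhx : h x = 1 / 2 * α x := by simp only [h, IccExtend_of_mem _ _ hx, domRestrict_apply]
    rw [hψ' t ht x hx, ← hhx]
    exact (hasDerivAt_riccatiSol_t hG hH (hD t ht x hx)).hasDerivWithinAt.congr
      (fun τ hτ => hψ' τ hτ x hx) (hψ' t ht x hx)
end
end

section
/- Discrete-time HJM theorem (Remark 3.5): let E = {0, 1, …, T} for T ∈ ℕ, and let (μ_t)_{t∈{0,…,T}} be an adapted process with values in ℝ_{≥0}^{T+1} on a filtered probability space, with E[sup_{t} Σ_{i=0}^T μ_t(i)] < ∞. For φ : E → ℝ set ⟨φ, μ⟩ := Σ_{i=0}^T φ(i) μ(i) and φ'(i) := (φ(i) − φ(i−1)) 1_{{i > 0}}. Assume that for every φ : E → ℝ the process t ↦ ⟨φ, μ_t⟩ + Σ_{j=1}^t ⟨φ', μ_{j−1}⟩ is a martingale on {0, …, T}. Then for every function w : ℝ → ℝ and every 0 ≤ τ_1 < τ_2 ≤ T, the discounted future price F(t, τ_1, τ_2) := Σ_{i=0}^T 1_{(τ_1, τ_2]}(t + i) w(t + i) μ_t(i) is a martingale on {0, 1, …, τ_1}. -/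
/-!
Write `M^φ_t = ⟨φ, μ_t⟩ + Σ_{j=1}^t ⟨φ', μ_{j-1}⟩` for the martingales of the hypothesis. The
identity `⟨φ, μ_{t+1}⟩ = M^φ_{t+1} - M^φ_t + ⟨φ - φ', μ_t⟩` shows, by induction on `t`, that every
`⟨ψ, μ_t⟩` is integrable and `ℱ_t`-measurable, and then, taking conditional expectations, that
`E[⟨φ, μ_{t+1}⟩ | ℱ_t] = ⟨φ - φ', μ_t⟩`. The future price is `⟨g(t + ·), μ_t⟩` with
`g = 1_{(τ₁,τ₂]} w`, and for `φ = g(t + 1 + ·)` one has `φ - φ' = g(t + ·)` as long as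
`g(t + 1) = g(t)`, which holds for `t + 1 ≤ τ₁` where both vanish.
-/

open MeasureTheory Finset

noncomputable section

/-- Discrete pairing `⟨φ, μ⟩ = Σ_{i=0}^T φ(i) μ(i)`. -/
def dpair (T : ℕ) (φ : ℕ → ℝ) (μ : ℕ → ℝ) : ℝ :=
  ∑ i ∈ Finset.range (T + 1), φ i * μ i

/-- Discrete derivative `φ'(i) = (φ(i) − φ(i−1)) 1_{i>0}`. -/
def dderiv (φ : ℕ → ℝ) (i : ℕ) : ℝ :=
  if 0 < i then φ i - φ (i - 1) else 0

/-- A real-valued martingale on the discrete time set `{0, …, N}`. -/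
def DIsMartOn {Ω : Type*} {m0 : MeasurableSpace Ω} (ℱ : MeasureTheory.Filtration ℕ m0)
    (Q : MeasureTheory.Measure Ω) (N : ℕ) (X : ℕ → Ω → ℝ) : Prop :=
  (∀ t ≤ N, MeasureTheory.Integrable (X t) Q ∧ StronglyMeasurable[ℱ t] (X t)) ∧
  ∀ s t : ℕ, s ≤ t → t ≤ N → Q[X t | ℱ s] =ᵐ[Q] X s

lemma dpair_sub (T : ℕ) (φ ψ ν : ℕ → ℝ) :
    dpair T (φ - ψ) ν = dpair T φ ν - dpair T ψ ν := by
  simp only [dpair, Pi.sub_apply, sub_mul, sum_sub_distrib]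

lemma sub_dderiv_shift_succ (g : ℕ → ℝ) (t : ℕ) (h : g (t + 1) = g t) :
    (fun i => g (t + 1 + i)) - dderiv (fun i => g (t + 1 + i)) = fun i => g (t + i) := by
  funext i
  rcases i with _ | i
  · simp [dderiv, h]
  · simp only [Pi.sub_apply, dderiv, Nat.succ_pos, if_true, Nat.add_sub_cancel, sub_sub_cancel]
    rw [show t + 1 + i = t + (i + 1) by omega]

lemma DIsMartOn.of_condExp_succ {Ω : Type*} {m0 : MeasurableSpace Ω} {ℱ : Filtration ℕ m0}
    {Q : Measure Ω} [IsFiniteMeasure Q] {N : ℕ} {X : ℕ → Ω → ℝ}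
    (hreg : ∀ t ≤ N, Integrable (X t) Q ∧ StronglyMeasurable[ℱ t] (X t))
    (hstep : ∀ t < N, Q[X (t + 1) | ℱ t] =ᵐ[Q] X t) : DIsMartOn ℱ Q N X := by
  refine ⟨hreg, fun s t hst htN => ?_⟩
  induction t, hst using Nat.le_induction with
  | base =>
    rw [condExp_of_stronglyMeasurable (ℱ.le s) (hreg s htN).2 (hreg s htN).1]
  | succ t hst ih =>
    calc Q[X (t + 1) | ℱ s] =ᵐ[Q] Q[Q[X (t + 1) | ℱ t] | ℱ s] :=
          (condExp_condExp_of_le (ℱ.mono hst) (ℱ.le t)).symm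
      _ =ᵐ[Q] Q[X t | ℱ s] := condExp_congr_ae (hstep t (by omega))
      _ =ᵐ[Q] X s := ih (by omega)

section HJM

variable {Ω : Type*} {m0 : MeasurableSpace Ω} {ℱ : Filtration ℕ m0} {Q : Measure Ω}
  {T : ℕ} {μ : ℕ → Ω → ℕ → ℝ}

def compensatedPairing (T : ℕ) (μ : ℕ → Ω → ℕ → ℝ) (φ : ℕ → ℝ) (t : ℕ) (ω : Ω) : ℝ :=
  dpair T φ (μ t ω) + ∑ j ∈ Icc 1 t, dpair T (dderiv φ) (μ (j - 1) ω)

lemma dpair_succ_eq_compensatedPairing (φ : ℕ → ℝ) (t : ℕ) (ω : Ω) :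
    dpair T φ (μ (t + 1) ω) = compensatedPairing T μ φ (t + 1) ω
      - (compensatedPairing T μ φ t ω - dpair T (φ - dderiv φ) (μ t ω)) := by
  simp only [compensatedPairing, dpair_sub, sum_Icc_succ_top (Nat.le_add_left 1 t),
    Nat.add_sub_cancel]
  ring

variable (hmart : ∀ φ, DIsMartOn ℱ Q T (compensatedPairing T μ φ))
include hmart

lemma integrable_and_stronglyMeasurable_dpair {t : ℕ} (ht : t ≤ T) (ψ : ℕ → ℝ) :
    Integrable (fun ω => dpair T ψ (μ t ω)) Q ∧
      StronglyMeasurable[ℱ t] (fun ω => dpair T ψ (μ t ω)) := by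
  induction t generalizing ψ with
  | zero =>
    have hM0 : compensatedPairing T μ ψ 0 = fun ω => dpair T ψ (μ 0 ω) := by
      funext ω
      simp [compensatedPairing]
    simpa only [hM0] using (hmart ψ).1 0 ht
  | succ t ih =>
    obtain ⟨hint, hmeas⟩ := ih (by omega) (ψ - dderiv ψ)
    obtain ⟨hMint, hMmeas⟩ := (hmart ψ).1 (t + 1) ht
    obtain ⟨hMint', hMmeas'⟩ := (hmart ψ).1 t (by omega)
    simp_rw [dpair_succ_eq_compensatedPairing]
    exact ⟨hMint.sub (hMint'.sub hint),
      hMmeas.sub ((hMmeas'.sub hmeas).mono (ℱ.mono t.le_succ))⟩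

lemma condExp_dpair_succ [IsFiniteMeasure Q] {t : ℕ} (ht : t + 1 ≤ T) (φ : ℕ → ℝ) :
    Q[fun ω => dpair T φ (μ (t + 1) ω) | ℱ t]
      =ᵐ[Q] fun ω => dpair T (φ - dderiv φ) (μ t ω) := by
  obtain ⟨hint, hmeas⟩ :=
    integrable_and_stronglyMeasurable_dpair hmart (t := t) (by omega) (φ - dderiv φ)
  obtain ⟨hMint, -⟩ := (hmart φ).1 (t + 1) ht
  obtain ⟨hMint', hMmeas'⟩ := (hmart φ).1 t (by omega)
  have hpast : Q[compensatedPairing T μ φ t - fun ω => dpair T (φ - dderiv φ) (μ t ω) | ℱ t]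
      = compensatedPairing T μ φ t - fun ω => dpair T (φ - dderiv φ) (μ t ω) :=
    condExp_of_stronglyMeasurable (ℱ.le t) (hMmeas'.sub hmeas) (hMint'.sub hint)
  rw [show (fun ω => dpair T φ (μ (t + 1) ω)) = compensatedPairing T μ φ (t + 1)
      - (compensatedPairing T μ φ t - fun ω => dpair T (φ - dderiv φ) (μ t ω)) from
    funext (dpair_succ_eq_compensatedPairing φ t)]
  filter_upwards [condExp_sub hMint (hMint'.sub hint) (ℱ t),
    (hmart φ).2 t (t + 1) t.le_succ ht] with ω hsub hM
  rw [hsub, Pi.sub_apply, hM, hpast]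
  simp

theorem dIsMartOn_dpair_shift [IsFiniteMeasure Q] (g : ℕ → ℝ) {N : ℕ} (hN : N ≤ T)
    (hg : ∀ t < N, g (t + 1) = g t) :
    DIsMartOn ℱ Q N (fun t ω => dpair T (fun i => g (t + i)) (μ t ω)) :=
  DIsMartOn.of_condExp_succ
    (fun t ht => integrable_and_stronglyMeasurable_dpair hmart (ht.trans hN) _)
    fun t ht => by
      simpa only [sub_dderiv_shift_succ g t (hg t ht)] using
        condExp_dpair_succ hmart (by omega) (fun i => g (t + 1 + i))

end HJM

theorem stmt16_general (T : ℕ)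
    {Ω : Type*} {m0 : MeasurableSpace Ω} (ℱ : Filtration ℕ m0)
    (Q : Measure Ω) [IsProbabilityMeasure Q]
    (μ : ℕ → Ω → ℕ → ℝ)
    (hmart : ∀ φ : ℕ → ℝ,
      DIsMartOn ℱ Q T (fun t ω =>
        dpair T φ (μ t ω) + ∑ j ∈ Finset.Icc 1 t, dpair T (dderiv φ) (μ (j - 1) ω)))
    (w : ℝ → ℝ) (τ₁ τ₂ : ℕ) (hτ : τ₁ < τ₂) (hτ₂ : τ₂ ≤ T) :
    DIsMartOn ℱ Q τ₁ (fun t ω =>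
      ∑ i ∈ Finset.range (T + 1),
        (if τ₁ < t + i ∧ t + i ≤ τ₂ then w (t + i) else 0) * μ t ω i) := by
  have hF := dIsMartOn_dpair_shift hmart (fun n : ℕ => if τ₁ < n ∧ n ≤ τ₂ then w n else 0)
    (by omega : τ₁ ≤ T) fun t ht => by
      rw [if_neg (by omega), if_neg (by omega)]
  simpa only [dpair, Nat.cast_add] using hF

/-- **Remark 3.5 (discrete-time HJM).** If `(μ_t)` is an adapted non-negative
`ℝ^{T+1}`-valued process with `E[sup_t Σ_i μ_t(i)] < ∞` such that for every `φ`
`⟨φ, μ_t⟩ + Σ_{j=1}^t ⟨φ', μ_{j−1}⟩` is a martingale, then for every weight `w` and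
`0 ≤ τ₁ < τ₂ ≤ T` the discounted future price
`F(t,τ₁,τ₂) = Σ_{i=0}^T 1_{(τ₁,τ₂]}(t+i) w(t+i) μ_t(i)` is a martingale on `{0,…,τ₁}`. -/
theorem stmt16 (T : ℕ)
    {Ω : Type*} {m0 : MeasurableSpace Ω} (ℱ : Filtration ℕ m0)
    (Q : Measure Ω) [IsProbabilityMeasure Q]
    (μ : ℕ → Ω → ℕ → ℝ)
    (hpos : ∀ t ω i, 0 ≤ μ t ω i)
    (hadapted : ∀ t i, StronglyMeasurable[ℱ t] (fun ω => μ t ω i))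
    (hsup : Integrable (fun ω => ⨆ t : Fin (T + 1), ∑ i ∈ Finset.range (T + 1), μ t ω i) Q)
    (hmart : ∀ φ : ℕ → ℝ,
      DIsMartOn ℱ Q T (fun t ω =>
        dpair T φ (μ t ω) + ∑ j ∈ Finset.Icc 1 t, dpair T (dderiv φ) (μ (j - 1) ω)))
    (w : ℝ → ℝ) (τ₁ τ₂ : ℕ) (hτ : τ₁ < τ₂) (hτ₂ : τ₂ ≤ T) :
    DIsMartOn ℱ Q τ₁ (fun t ω =>
      ∑ i ∈ Finset.range (T + 1),
        (if τ₁ < t + i ∧ t + i ≤ τ₂ then w (t + i) else 0) * μ t ω i) :=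
  stmt16_general T ℱ Q μ hmart w τ₁ τ₂ hτ hτ₂
end
end

section
/- Discrete summation-by-parts martingale lemma (from the proof of Remark 3.5): let E = {0, 1, …, T}, (μ_t)_{t∈{0,…,T}} an adapted ℝ_{≥0}^{T+1}-valued process with E[sup_t Σ_{i=0}^T μ_t(i)] < ∞, and suppose that for every φ : E → ℝ the process t ↦ ⟨φ, μ_t⟩ + Σ_{j=1}^t ⟨φ', μ_{j−1}⟩ is a martingale, where ⟨φ, μ⟩ := Σ_{i=0}^T φ(i) μ(i) and φ'(i) := (φ(i) − φ(i−1)) 1_{{i>0}}. Then for all functions ψ, φ : {0, …, T} → ℝ, with the convention φ(−1) := φ(0), the process t ↦ ψ(t) ⟨φ, μ_t⟩ + Σ_{j=1}^t Σ_{i=0}^T ( ψ(j−1) φ(i) − ψ(j) φ(i−1) ) μ_{j−1}(i) is a martingale on {0, …, T}. -/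
/-!
Writing `X` for the martingale of the hypothesis attached to `φ`, a summation by parts in the
space variable shows that the increments of the process in the conclusion are
`ψ(t+1) (X_{t+1} - X_t)`. It is therefore a martingale transform of `X` by the deterministic
sequence `ψ`, and such transforms are martingales.
-/

open MeasureTheory Finset

noncomputable section

section Martingale

variable {Ω : Type*} {m0 : MeasurableSpace Ω} {ℱ : Filtration ℕ m0} {Q : Measure Ω}
  [IsFiniteMeasure Q] {N : ℕ}

lemma dIsMartOn_of_condExp_succ {X : ℕ → Ω → ℝ}
    (hreg : ∀ t ≤ N, Integrable (X t) Q ∧ StronglyMeasurable[ℱ t] (X t))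
    (hstep : ∀ t < N, Q[X (t + 1) | ℱ t] =ᵐ[Q] X t) :
    DIsMartOn ℱ Q N X := by
  refine ⟨hreg, fun s t hst => ?_⟩
  induction t, hst using Nat.le_induction with
  | base =>
    intro hs
    rw [condExp_of_stronglyMeasurable (ℱ.le s) (hreg s hs).2 (hreg s hs).1]
  | succ t hst ih =>
    intro ht
    calc Q[X (t + 1) | ℱ s] =ᵐ[Q] Q[Q[X (t + 1) | ℱ t] | ℱ s] :=
          (condExp_condExp_of_le (ℱ.mono hst) (ℱ.le t)).symm
      _ =ᵐ[Q] Q[X t | ℱ s] := condExp_congr_ae (hstep t ht)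
      _ =ᵐ[Q] X s := ih (by omega)

lemma DIsMartOn.transform {X Y : ℕ → Ω → ℝ} (c : ℕ → ℝ) (hX : DIsMartOn ℱ Q N X)
    (hY₀ : Integrable (Y 0) Q) (hY₀meas : StronglyMeasurable[ℱ 0] (Y 0))
    (hY : ∀ t < N, Y (t + 1) = Y t + c (t + 1) • (X (t + 1) - X t)) :
    DIsMartOn ℱ Q N Y := by
  have hreg : ∀ t ≤ N, Integrable (Y t) Q ∧ StronglyMeasurable[ℱ t] (Y t) := by
    intro t
    induction t with
    | zero => exact fun _ => ⟨hY₀, hY₀meas⟩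
    | succ t ih =>
      intro ht
      obtain ⟨hYi, hYm⟩ := ih (by omega)
      obtain ⟨hXi', hXm'⟩ := hX.1 (t + 1) ht
      obtain ⟨hXi, hXm⟩ := hX.1 t (by omega)
      have hle : ℱ t ≤ ℱ (t + 1) := ℱ.mono t.le_succ
      rw [hY t (by omega)]
      exact ⟨hYi.add ((hXi'.sub hXi).smul _),
        (hYm.mono hle).add ((hXm'.sub (hXm.mono hle)).const_smul _)⟩
  refine dIsMartOn_of_condExp_succ hreg fun t ht => ?_
  obtain ⟨hXi', -⟩ := hX.1 (t + 1) ht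
  obtain ⟨hXi, -⟩ := hX.1 t (by omega)
  rw [hY t ht]
  filter_upwards [condExp_add (hreg t ht.le).1 ((hXi'.sub hXi).smul (c (t + 1))) (ℱ t),
    condExp_smul (c (t + 1)) (X (t + 1) - X t) (ℱ t), condExp_sub hXi' hXi (ℱ t),
    hX.2 t (t + 1) t.le_succ ht, hX.2 t t le_rfl ht.le] with ω hadd hsmul hsub hnext hnow
  rw [hadd, Pi.add_apply, hsmul, Pi.smul_apply, hsub, Pi.sub_apply, hnext, hnow,
    condExp_of_stronglyMeasurable (ℱ.le t) (hreg t ht.le).2 (hreg t ht.le).1]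
  simp

end Martingale

/-- At `i = 0` truncated subtraction gives `φ (0 - 1) = φ 0`, the convention `φ(-1) := φ(0)`. -/
lemma sum_mul_sub_mul_pred (T : ℕ) (a b : ℝ) (φ m : ℕ → ℝ) :
    ∑ i ∈ range (T + 1), (a * φ i - b * φ (i - 1)) * m i
      = b * dpair T (dderiv φ) m + (a - b) * dpair T φ m := by
  simp only [dpair, mul_sum, ← sum_add_distrib]
  refine sum_congr rfl fun i _ => ?_
  rcases Nat.eq_zero_or_pos i with rfl | hi
  · simp only [zero_tsub, dderiv, lt_self_iff_false, if_false, zero_mul, mul_zero, zero_add]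
    ring
  · simp only [dderiv, if_pos hi]; ring

theorem stmt17_general (T : ℕ)
    {Ω : Type*} {m0 : MeasurableSpace Ω} (ℱ : Filtration ℕ m0)
    (Q : Measure Ω) [IsProbabilityMeasure Q]
    (μ : ℕ → Ω → ℕ → ℝ)
    (hmart : ∀ φ : ℕ → ℝ,
      DIsMartOn ℱ Q T (fun t ω =>
        dpair T φ (μ t ω) + ∑ j ∈ Finset.Icc 1 t, dpair T (dderiv φ) (μ (j - 1) ω)))
    (ψ φ : ℕ → ℝ) :
    DIsMartOn ℱ Q T (fun t ω =>
      ψ t * dpair T φ (μ t ω)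
        + ∑ j ∈ Finset.Icc 1 t, ∑ i ∈ Finset.range (T + 1),
            (ψ (j - 1) * φ i - ψ j * φ (i - 1)) * μ (j - 1) ω i) := by
  have hX := hmart φ
  refine hX.transform ψ ?_ ?_ fun t _ => ?_
  · simpa using (hX.1 0 T.zero_le).1.const_mul (ψ 0)
  · simpa using (hX.1 0 T.zero_le).2.const_mul (ψ 0)
  · funext ω
    simp only [Pi.add_apply, Pi.smul_apply, Pi.sub_apply, smul_eq_mul,
      sum_Icc_succ_top (Nat.le_add_left 1 t), Nat.add_sub_cancel, sum_mul_sub_mul_pred]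
    ring

/-- **Discrete summation-by-parts martingale lemma (proof of Remark 3.5).** Under the
discrete HJM condition, for all `ψ, φ : {0,…,T} → ℝ` (with the convention
`φ(−1) := φ(0)`, realised here by truncated subtraction on `ℕ`), the process
`ψ(t)⟨φ, μ_t⟩ + Σ_{j=1}^t Σ_{i=0}^T (ψ(j−1)φ(i) − ψ(j)φ(i−1)) μ_{j−1}(i)`
is a martingale on `{0,…,T}`. -/
theorem stmt17 (T : ℕ)
    {Ω : Type*} {m0 : MeasurableSpace Ω} (ℱ : Filtration ℕ m0)
    (Q : Measure Ω) [IsProbabilityMeasure Q]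
    (μ : ℕ → Ω → ℕ → ℝ)
    (hpos : ∀ t ω i, 0 ≤ μ t ω i)
    (hadapted : ∀ t i, StronglyMeasurable[ℱ t] (fun ω => μ t ω i))
    (hsup : Integrable (fun ω => ⨆ t : Fin (T + 1), ∑ i ∈ Finset.range (T + 1), μ t ω i) Q)
    (hmart : ∀ φ : ℕ → ℝ,
      DIsMartOn ℱ Q T (fun t ω =>
        dpair T φ (μ t ω) + ∑ j ∈ Finset.Icc 1 t, dpair T (dderiv φ) (μ (j - 1) ω)))
    (ψ φ : ℕ → ℝ) :
    DIsMartOn ℱ Q T (fun t ω =>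
      ψ t * dpair T φ (μ t ω)
        + ∑ j ∈ Finset.Icc 1 t, ∑ i ∈ Finset.range (T + 1),
            (ψ (j - 1) * φ i - ψ j * φ (i - 1)) * μ (j - 1) ω i) :=
  stmt17_general T ℱ Q μ hmart ψ φ
end
end
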